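/- arXiv:2401.00838 — 2 statements merged into one kernel-verified Lean document; each statement's English description precedes it below -/
import Mathlib

section
/- Let v ∈ 𝔳 be nonzero. The following are equivalent: (i) for every unit vector (v', z', s') ∈ 𝔳 × 𝔷 × ℝ with ⟨v', v⟩ = 0 and [v', v] = 0, and for every θ ∈ (−1, 1), the 𝔳-component V(θ) = (2θ(1−s'θ)/χ(θ))·v' + (2θ²/χ(θ))·J_{z'}(v') of the reparametrized geodesic γ with data (v', z', s') satisfies [V(θ), v] = 0 and ⟨V(θ), v⟩ = 0; (ii) v satisfies the J²-condition. (Equivalently: the focal variety F(v) = {(V, Z, t) : t > 0, [V, v] = 0, ⟨V, v⟩ = 0} — and hence every focal variety F_⊛^η obtained from it by left translation — is totally geodesic if and only if v satisfies the J²-condition.) -/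
/-!
Put `S = ℝ v + J_𝔷 v`. By skew-symmetry of the `J_z`, the conditions `⟨v', v⟩ = 0`,
`[v', v] = 0` say exactly that `v' ∈ Sᗮ`. The `𝔳`-component of the geodesic is a combination
of `v'` and `J_{z'} v'` whose second coefficient is nonzero at `θ = 1/2`, so condition (i) says
that `Sᗮ` is invariant under every `J_z`; equivalently `S` is, i.e. `J_{z₁} J_{z₂} v ∈ S` for all
`z₁, z₂`. Splitting `z₂` orthogonally along `z₁` and using `J_{z₁}² = -‖z₁‖²` reduces this to
orthogonal pairs, and for those the `v`-component of `J_{z₁} J_{z₂} v` is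
`-⟨z₁, z₂⟩ ‖v‖² = 0`: this is the `J²`-condition.
-/

open RealInnerProductSpace

section

variable {E F : Type*} [NormedAddCommGroup E] [InnerProductSpace ℝ E]
  [NormedAddCommGroup F] [InnerProductSpace ℝ F]

theorem inner_map_map_of_norm_map_eq {T : E →ₗ[ℝ] F} {r : ℝ} (hT : ∀ x, ‖T x‖ = r * ‖x‖)
    (a b : E) : ⟪T a, T b⟫ = r ^ 2 * ⟪a, b⟫ := by
  have hsq : ∀ x, ‖T x‖ ^ 2 = r ^ 2 * ‖x‖ ^ 2 := fun x => by rw [hT]; ring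
  have hab := hsq (a + b)
  rw [map_add, norm_add_sq_real, norm_add_sq_real, hsq a, hsq b] at hab
  linear_combination hab / 2

theorem inner_map_left_eq_neg_of_map_map_eq {T : E →ₗ[ℝ] E} {r : ℝ}
    (hsq : ∀ x, T (T x) = -(r ^ 2) • x) (hT : ∀ x, ‖T x‖ = r * ‖x‖) (a b : E) :
    ⟪T a, b⟫ = -⟪a, T b⟫ := by
  rcases eq_or_ne r 0 with rfl | hr
  · have hT0 : ∀ x, T x = 0 := fun x => norm_eq_zero.mp (by simp [hT])
    simp [hT0]
  · have h := inner_map_map_of_norm_map_eq hT a (T b)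
    rw [hsq, inner_smul_right] at h
    have hr2 : r ^ 2 ≠ 0 := pow_ne_zero 2 hr
    apply mul_left_cancel₀ hr2
    linear_combination -h

theorem orthogonal_le_comap_of_le_comap {T : E →ₗ[ℝ] E} (hT : ∀ x y, ⟪T x, y⟫ = -⟪x, T y⟫)
    {K : Submodule ℝ E} (hK : K ≤ K.comap T) : Kᗮ ≤ Kᗮ.comap T := by
  intro u hu
  rw [Submodule.mem_comap, Submodule.mem_orthogonal]
  intro s hs
  rw [← neg_eq_zero, ← hT]
  exact Submodule.inner_right_of_mem_orthogonal (Submodule.mem_comap.mp (hK hs)) hu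

theorem le_comap_iff_orthogonal_le_comap {T : E →ₗ[ℝ] E} (hT : ∀ x y, ⟪T x, y⟫ = -⟪x, T y⟫)
    (K : Submodule ℝ E) [K.HasOrthogonalProjection] : K ≤ K.comap T ↔ Kᗮ ≤ Kᗮ.comap T := by
  refine ⟨orthogonal_le_comap_of_le_comap hT, fun h => ?_⟩
  simpa only [Submodule.orthogonal_orthogonal] using orthogonal_le_comap_of_le_comap hT h

end

section HType

variable {𝕍 𝕫 : Type*} [NormedAddCommGroup 𝕍] [InnerProductSpace ℝ 𝕍]
  [NormedAddCommGroup 𝕫] [InnerProductSpace ℝ 𝕫]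

def jSpan (J : 𝕫 →ₗ[ℝ] 𝕍 →ₗ[ℝ] 𝕍) (v : 𝕍) : Submodule ℝ 𝕍 :=
  (ℝ ∙ v) ⊔ LinearMap.range (J.flip v)

instance [FiniteDimensional ℝ 𝕫] (J : 𝕫 →ₗ[ℝ] 𝕍 →ₗ[ℝ] 𝕍) (v : 𝕍) :
    FiniteDimensional ℝ (jSpan J v) := by
  unfold jSpan
  infer_instance

def J2Condition (J : 𝕫 →ₗ[ℝ] 𝕍 →ₗ[ℝ] 𝕍) (v : 𝕍) : Prop :=
  ∀ z₁ z₂ : 𝕫, ⟪z₁, z₂⟫ = 0 → ∃ z₃ : 𝕫, J z₁ (J z₂ v) = J z₃ v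

theorem forall_geodesic_mem_iff_forall_le_comap (J : 𝕫 →ₗ[ℝ] 𝕍 →ₗ[ℝ] 𝕍) (K : Submodule ℝ 𝕍) :
    (∀ (v' : 𝕍) (z' : 𝕫) (s' : ℝ), ‖v'‖ ^ 2 + ‖z'‖ ^ 2 + s' ^ 2 = 1 → v' ∈ K →
      ∀ θ ∈ Set.Ioo (-1 : ℝ) 1, ∀ χ : ℝ, χ = (1 - s' * θ) ^ 2 + ‖z'‖ ^ 2 * θ ^ 2 →
        ∀ Vθ : 𝕍, Vθ = (2 * θ * (1 - s' * θ) / χ) • v' + (2 * θ ^ 2 / χ) • J z' v' → Vθ ∈ K) ↔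
      ∀ z, K ≤ K.comap (J z) := by
  refine ⟨fun H z u hu => ?_, ?_⟩
  · rw [Submodule.mem_comap]
    rcases eq_or_ne u 0 with rfl | hu0
    · simp
    -- rescale `(u, z)` to a unit initial velocity with `s' = 0` and look at `θ = 1/2`
    set c := √(‖u‖ ^ 2 + ‖z‖ ^ 2)
    have hc : 0 < c := Real.sqrt_pos.2 (by positivity)
    have hunit : ‖c⁻¹ • u‖ ^ 2 + ‖c⁻¹ • z‖ ^ 2 + 0 ^ 2 = 1 := by
      rw [norm_smul, norm_smul, Real.norm_eq_abs, abs_inv, abs_of_pos hc]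
      field_simp
      rw [Real.sq_sqrt (by positivity)]
      ring
    have h := H _ _ 0 hunit (K.smul_mem _ hu) (1 / 2) (by norm_num) _ rfl _ rfl
    simp only [map_smul, LinearMap.smul_apply, smul_smul] at h
    rwa [K.add_mem_iff_right (K.smul_mem _ hu), K.smul_mem_iff (by positivity)] at h
  · rintro H v' z' s' - hv' θ - χ - Vθ rfl
    exact K.add_mem (K.smul_mem _ hv') (K.smul_mem _ (H z' hv'))

theorem apply_mem_jSpan (J : 𝕫 →ₗ[ℝ] 𝕍 →ₗ[ℝ] 𝕍) (v : 𝕍) (z : 𝕫) : J z v ∈ jSpan J v :=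
  Submodule.mem_sup_right ⟨z, rfl⟩

variable {J : 𝕫 →ₗ[ℝ] 𝕍 →ₗ[ℝ] 𝕍}

theorem mem_orthogonal_jSpan_iff (hskew : ∀ z a b, ⟪J z a, b⟫ = -⟪a, J z b⟫)
    {br : 𝕍 →ₗ[ℝ] 𝕍 →ₗ[ℝ] 𝕫} (hbr : ∀ U V Z, ⟪br U V, Z⟫ = ⟪J Z U, V⟫) {v u : 𝕍} :
    u ∈ (jSpan J v)ᗮ ↔ br u v = 0 ∧ ⟪u, v⟫ = 0 := by
  rw [jSpan, ← Submodule.inf_orthogonal, Submodule.mem_inf,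
    Submodule.mem_orthogonal_singleton_iff_inner_left, and_comm]
  refine and_congr_left fun _ => ?_
  simp only [Submodule.mem_orthogonal, LinearMap.mem_range, forall_exists_index,
    forall_apply_eq_imp_iff, LinearMap.flip_apply]
  have hbr' : ∀ z, ⟪br u v, z⟫ = -⟪J z v, u⟫ := fun z => by
    rw [hbr, hskew, real_inner_comm]
  constructor
  · intro h
    rw [← inner_self_eq_zero (𝕜 := ℝ), hbr', h, neg_zero]
  · intro h z
    rw [← neg_eq_zero, ← hbr', h, inner_zero_left]

theorem jSpan_le_comap_iff {v : 𝕍} :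
    (∀ z, jSpan J v ≤ (jSpan J v).comap (J z)) ↔ ∀ z₁ z₂, J z₁ (J z₂ v) ∈ jSpan J v := by
  refine ⟨fun h z₁ z₂ => h z₁ (apply_mem_jSpan J v z₂), fun h z => ?_⟩
  refine sup_le ?_ ?_
  · rw [Submodule.span_singleton_le_iff_mem]
    exact apply_mem_jSpan J v z
  · rintro _ ⟨w, rfl⟩
    exact h z w

theorem j2Condition_iff_forall_mem_jSpan (hJsq : ∀ z v, J z (J z v) = -(‖z‖ ^ 2) • v)
    (hJnorm : ∀ z v, ‖J z v‖ = ‖z‖ * ‖v‖) {v : 𝕍} :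
    J2Condition J v ↔ ∀ z₁ z₂, J z₁ (J z₂ v) ∈ jSpan J v := by
  constructor
  · intro h z₁ z₂
    set c := ⟪z₁, z₂⟫ / ‖z₁‖ ^ 2
    have hperp : ⟪z₁, z₂ - c • z₁⟫ = 0 := by
      rw [inner_sub_right, real_inner_smul_right, real_inner_self_eq_norm_sq]
      rcases eq_or_ne z₁ 0 with rfl | hz
      · simp
      · rw [div_mul_cancel₀ _ (pow_ne_zero 2 (norm_ne_zero_iff.2 hz)), sub_self]
    obtain ⟨z₃, hz₃⟩ := h z₁ _ hperp
    have hsplit : J z₁ (J z₂ v) = (-(c * ‖z₁‖ ^ 2)) • v + J z₃ v := by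
      have hJz₂ : J z₂ = J (z₂ - c • z₁) + c • J z₁ := by
        rw [← map_smul, ← map_add, sub_add_cancel]
      rw [hJz₂, LinearMap.add_apply, map_add, LinearMap.smul_apply, map_smul, hJsq, hz₃,
        smul_smul, add_comm, mul_neg]
    rw [hsplit]
    exact add_mem (Submodule.mem_sup_left (Submodule.smul_mem _ _
      (Submodule.mem_span_singleton_self v))) (apply_mem_jSpan J v z₃)
  · intro h z₁ z₂ h12
    obtain ⟨_, hy, _, ⟨z₃, rfl⟩, hsum⟩ := Submodule.mem_sup.mp (h z₁ z₂)
    obtain ⟨c, rfl⟩ := Submodule.mem_span_singleton.mp hy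
    refine ⟨z₃, ?_⟩
    have hskew z := inner_map_left_eq_neg_of_map_map_eq (hJsq z) (hJnorm z)
    have hJJ : ⟪J z₂ v, J z₁ v⟫ = ‖v‖ ^ 2 * ⟪z₂, z₁⟫ :=
      inner_map_map_of_norm_map_eq (T := J.flip v) (fun z => by simp [hJnorm, mul_comm]) z₂ z₁
    have h₁ : ⟪J z₁ (J z₂ v), v⟫ = 0 := by
      rw [hskew, hJJ, real_inner_comm, h12, mul_zero, neg_zero]
    have h₃ : ⟪J z₃ v, v⟫ = 0 := by
      linarith [hskew z₃ v v, real_inner_comm v (J z₃ v)]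
    have hcv : ⟪c • v, v⟫ = 0 := by
      rw [eq_sub_of_add_eq hsum, inner_sub_left, LinearMap.flip_apply, h₁, h₃, sub_zero]
    have hcv0 : c • v = 0 := by
      rw [← inner_self_eq_zero (𝕜 := ℝ), real_inner_smul_right, hcv, mul_zero]
    rw [← hsum, hcv0, zero_add, LinearMap.flip_apply]

end HType

theorem stmt_17_general
    {𝕍 𝕫 : Type*} [NormedAddCommGroup 𝕍] [InnerProductSpace ℝ 𝕍]
    [NormedAddCommGroup 𝕫] [InnerProductSpace ℝ 𝕫] [FiniteDimensional ℝ 𝕫]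
    (J : 𝕫 →ₗ[ℝ] 𝕍 →ₗ[ℝ] 𝕍)
    (hJsq : ∀ (z : 𝕫) (v : 𝕍), J z (J z v) = -(‖z‖ ^ 2) • v)
    (hJnorm : ∀ (z : 𝕫) (v : 𝕍), ‖J z v‖ = ‖z‖ * ‖v‖)
    (br : 𝕍 →ₗ[ℝ] 𝕍 →ₗ[ℝ] 𝕫)
    (hbr : ∀ (U V : 𝕍) (Z : 𝕫), ⟪br U V, Z⟫ = ⟪J Z U, V⟫)
    (v : 𝕍) :
    (∀ (v' : 𝕍) (z' : 𝕫) (s' : ℝ),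
        ‖v'‖ ^ 2 + ‖z'‖ ^ 2 + s' ^ 2 = 1 → ⟪v', v⟫ = 0 → br v' v = 0 →
        ∀ θ ∈ Set.Ioo (-1 : ℝ) 1,
          ∀ χ : ℝ, χ = (1 - s' * θ) ^ 2 + ‖z'‖ ^ 2 * θ ^ 2 →
          ∀ Vθ : 𝕍,
            Vθ = (2 * θ * (1 - s' * θ) / χ) • v' + (2 * θ ^ 2 / χ) • J z' v' →
            br Vθ v = 0 ∧ ⟪Vθ, v⟫ = 0) ↔
      (∀ z₁ z₂ : 𝕫, ⟪z₁, z₂⟫ = 0 → ∃ z₃ : 𝕫, J z₁ (J z₂ v) = J z₃ v) := by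
  have hskew (z : 𝕫) := inner_map_left_eq_neg_of_map_map_eq (hJsq z) (hJnorm z)
  have hmem (u : 𝕍) := mem_orthogonal_jSpan_iff hskew hbr (v := v) (u := u)
  calc _ ↔ ∀ z, (jSpan J v)ᗮ ≤ (jSpan J v)ᗮ.comap (J z) := by
          rw [← forall_geodesic_mem_iff_forall_le_comap]
          simp only [hmem, and_imp]
          exact forall₃_congr fun _ _ _ => forall_congr' fun _ => imp.swap
    _ ↔ ∀ z, jSpan J v ≤ (jSpan J v).comap (J z) :=
      forall_congr' fun z => (le_comap_iff_orthogonal_le_comap (hskew z) _).symm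
    _ ↔ ∀ z₁ z₂, J z₁ (J z₂ v) ∈ jSpan J v := jSpan_le_comap_iff
    _ ↔ J2Condition J v := (j2Condition_iff_forall_mem_jSpan hJsq hJnorm).symm

/-- For `v ∈ 𝔳` nonzero, the focal variety `F(v) = {(V,Z,t) : t > 0, [V,v] = 0,
⟨V,v⟩ = 0}` is totally geodesic — i.e. for every unit `(v',z',s')` with `⟨v',v⟩ = 0`
and `[v',v] = 0` and every `θ ∈ (-1,1)`, the `𝔳`-component `V(θ)` of the geodesic with
data `(v',z',s')` satisfies `[V(θ),v] = 0` and `⟨V(θ),v⟩ = 0` — if and only if `v`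
satisfies the `J²`-condition. -/
theorem stmt_17
    {𝕍 𝕫 : Type*} [NormedAddCommGroup 𝕍] [InnerProductSpace ℝ 𝕍] [FiniteDimensional ℝ 𝕍]
    [NormedAddCommGroup 𝕫] [InnerProductSpace ℝ 𝕫] [FiniteDimensional ℝ 𝕫]
    (J : 𝕫 →ₗ[ℝ] 𝕍 →ₗ[ℝ] 𝕍)
    (hJsq : ∀ (z : 𝕫) (v : 𝕍), J z (J z v) = -(‖z‖ ^ 2) • v)
    (hJnorm : ∀ (z : 𝕫) (v : 𝕍), ‖J z v‖ = ‖z‖ * ‖v‖)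
    (br : 𝕍 →ₗ[ℝ] 𝕍 →ₗ[ℝ] 𝕫)
    (hbr : ∀ (U V : 𝕍) (Z : 𝕫), ⟪br U V, Z⟫ = ⟪J Z U, V⟫)
    (v : 𝕍) (hv : v ≠ 0) :
    (∀ (v' : 𝕍) (z' : 𝕫) (s' : ℝ),
        ‖v'‖ ^ 2 + ‖z'‖ ^ 2 + s' ^ 2 = 1 → ⟪v', v⟫ = 0 → br v' v = 0 →
        ∀ θ ∈ Set.Ioo (-1 : ℝ) 1,
          ∀ χ : ℝ, χ = (1 - s' * θ) ^ 2 + ‖z'‖ ^ 2 * θ ^ 2 →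
          ∀ Vθ : 𝕍,
            Vθ = (2 * θ * (1 - s' * θ) / χ) • v' + (2 * θ ^ 2 / χ) • J z' v' →
            br Vθ v = 0 ∧ ⟪Vθ, v⟫ = 0) ↔
      (∀ z₁ z₂ : 𝕫, ⟪z₁, z₂⟫ = 0 → ∃ z₃ : 𝕫, J z₁ (J z₂ v) = J z₃ v) :=
  stmt_17_general J hJsq hJnorm br hbr v
end

section
/- For all real numbers t₀ < 0 and c > 0, the improper integral ∫₀^c 1/√(x² − 4t₀x) dx converges and equals 2·ln(√(c − 4t₀) + √c) − ln(−4t₀); consequently, if r denotes this integral, then c = −4t₀·sinh²(r/2). (In the Damek–Ricci space, r is the radius of the tube D_{x₀}^{-1}(c) about the focal variety F_{x₀} of the isoparametric function D_{x₀}, whose transnormality function is b(x) = x² − 4t₀x.) -/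
/-!
Write `a = -4t₀ > 0`. The substitution `x = a sinh² t` turns `dx / √(x² + a x)` into `2 dt`,
so `2 arsinh √(x / a)` is an antiderivative on `(0, ∞)`, continuous up to `0`; near `0` the
integrand is dominated by `a^{-1/2} x^{-1/2}`. Hence the integral is `r = 2 arsinh √(c / a)`,
which is the stated logarithm and gives `sinh (r / 2) = √(c / a)`.
-/

open Real MeasureTheory intervalIntegral Set

lemma one_div_sqrt_sq_add_mul_le {a x : ℝ} (ha : 0 < a) (hx : 0 < x) :
    1 / √(x ^ 2 + a * x) ≤ (√a)⁻¹ * x ^ (-(1 / 2) : ℝ) := by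
  rw [rpow_neg hx.le, ← sqrt_eq_rpow, ← mul_inv, one_div, ← sqrt_mul ha.le]
  gcongr
  nlinarith

lemma intervalIntegrable_inv_sqrt_sq_add_mul {a c : ℝ} (ha : 0 < a) (hc : 0 ≤ c) :
    IntervalIntegrable (fun x => 1 / √(x ^ 2 + a * x)) volume 0 c := by
  refine ((intervalIntegrable_rpow' (r := -(1 / 2)) (by norm_num)).const_mul (√a)⁻¹).mono_fun
    (Measurable.aestronglyMeasurable (by fun_prop)) ?_
  filter_upwards [ae_restrict_mem measurableSet_uIoc] with x hx
  rw [uIoc_of_le hc] at hx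
  rw [norm_of_nonneg (by positivity), norm_of_nonneg (by have := hx.1; positivity)]
  exact one_div_sqrt_sq_add_mul_le ha hx.1

lemma hasDerivAt_two_mul_arsinh_sqrt_div {a x : ℝ} (ha : 0 < a) (hx : 0 < x) :
    HasDerivAt (fun x => 2 * arsinh √(x / a)) (1 / √(x ^ 2 + a * x)) x := by
  have hsqrt : HasDerivAt (fun x => √(x / a)) (1 / (2 * √(x / a)) * (1 / a)) x :=
    (hasDerivAt_sqrt (by positivity)).comp x ((hasDerivAt_id x).div_const a |>.congr_deriv
      (by simp))
  refine (((hasDerivAt_arsinh _).comp x hsqrt).const_mul 2).congr_deriv ?_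
  have hfactor : x ^ 2 + a * x = a ^ 2 * (x / a * (1 + x / a)) := by field_simp; ring
  have : 0 < √(x / a) := sqrt_pos.2 (by positivity)
  rw [sq_sqrt (by positivity), hfactor, sqrt_mul (sq_nonneg a), sqrt_sq ha.le,
    sqrt_mul (by positivity)]
  field_simp

theorem integral_inv_sqrt_sq_add_mul {a c : ℝ} (ha : 0 < a) (hc : 0 ≤ c) :
    ∫ x in (0 : ℝ)..c, 1 / √(x ^ 2 + a * x) = 2 * arsinh √(c / a) := by
  rw [integral_eq_sub_of_hasDerivAt_of_le hc
    (continuous_const.mul (continuous_arsinh.comp (by fun_prop))).continuousOn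
    (fun x hx => hasDerivAt_two_mul_arsinh_sqrt_div ha hx.1)
    (intervalIntegrable_inv_sqrt_sq_add_mul ha hc)]
  simp

lemma two_mul_arsinh_sqrt_div_eq_log {a c : ℝ} (ha : 0 < a) (hc : 0 ≤ c) :
    2 * arsinh √(c / a) = 2 * log (√(c + a) + √c) - log a := by
  have h1 : 1 + √(c / a) ^ 2 = (c + a) / a := by
    rw [sq_sqrt (by positivity)]; field_simp; ring
  have : 0 < √(c + a) := sqrt_pos.2 (by linarith)
  rw [arsinh, h1, sqrt_div' _ ha.le, sqrt_div' _ ha.le, ← add_div,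
    log_div (by positivity) (sqrt_pos.2 ha).ne', log_sqrt ha.le, add_comm √c]
  ring

theorem mul_sinh_half_integral_inv_sqrt_sq_add_mul_sq {a c : ℝ} (ha : 0 < a) (hc : 0 ≤ c) :
    a * sinh ((∫ x in (0 : ℝ)..c, 1 / √(x ^ 2 + a * x)) / 2) ^ 2 = c := by
  rw [integral_inv_sqrt_sq_add_mul ha hc, mul_div_cancel_left₀ _ two_ne_zero, sinh_arsinh,
    sq_sqrt (by positivity)]
  field_simp

/-- For `t₀ < 0` and `c > 0`, the improper integral `∫₀^c dx/√(x² - 4t₀x)` converges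
and equals `2 ln(√(c - 4t₀) + √c) - ln(-4t₀)`; consequently, if `r` denotes this
integral, then `c = -4t₀ sinh²(r/2)` (Wang's tube-radius formula for the tube
`D_{x₀}⁻¹(c)` about the focal variety `F_{x₀}`, with transnormality function
`b(x) = x² - 4t₀x`). -/
theorem stmt_18 (t₀ c : ℝ) (ht₀ : t₀ < 0) (hc : 0 < c) :
    IntervalIntegrable (fun x : ℝ => 1 / Real.sqrt (x ^ 2 - 4 * t₀ * x))
      MeasureTheory.volume 0 c ∧
    (∫ x in (0 : ℝ)..c, 1 / Real.sqrt (x ^ 2 - 4 * t₀ * x)) =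
      2 * Real.log (Real.sqrt (c - 4 * t₀) + Real.sqrt c) - Real.log (-(4 * t₀)) ∧
    (∀ r : ℝ, r = (∫ x in (0 : ℝ)..c, 1 / Real.sqrt (x ^ 2 - 4 * t₀ * x)) →
      c = -(4 * t₀) * Real.sinh (r / 2) ^ 2) := by
  have ha : 0 < -(4 * t₀) := by linarith
  have hb : (fun x : ℝ => 1 / √(x ^ 2 - 4 * t₀ * x)) =
      fun x => 1 / √(x ^ 2 + -(4 * t₀) * x) := by
    ext x; ring_nf
  rw [hb]
  refine ⟨intervalIntegrable_inv_sqrt_sq_add_mul ha hc.le, ?_, ?_⟩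
  · rw [integral_inv_sqrt_sq_add_mul ha hc.le, two_mul_arsinh_sqrt_div_eq_log ha hc.le,
      ← sub_eq_add_neg]
  · rintro r rfl
    exact (mul_sinh_half_integral_inv_sqrt_sq_add_mul_sq ha hc.le).symm
end
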